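/- arXiv:0901.1821 — 2 statements merged into one kernel-verified Lean document; each statement's English description precedes it below -/
import Mathlib

section
/- The Motzkin form x0^6 - 3 x0^2 x1^2 x2^2 + x1^4 x2^2 + x1^2 x2^4 is not a sum of squares of polynomials. -/
/-!
If `p = ∑ qᵢ²` and `w` is a linear functional on exponents, take the `w`-largest exponent `μ`
occurring in any `qᵢ`, ties broken lexicographically. Then `2μ` arises in `∑ qᵢ²` only as `μ + μ`,
with coefficient `∑ coeff μ (qᵢ)² > 0`, so `2 w(ν) ≤ max w` over the support of `p` for every
exponent `ν` of every `qᵢ`: the `qᵢ` live in half the Newton polytope of `p`. For the Motzkin form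
its lattice points are (3,0,0), (1,1,1), (0,2,1), (0,1,2), and among them (2,2,2) is only
(1,1,1) + (1,1,1). So the coefficient of `x₀²x₁²x₂²` in `∑ qᵢ²` is `∑ coeff (1,1,1) (qᵢ)² ≥ 0`,
whereas in the Motzkin form it is `-3`.
-/

open MvPolynomial Function

namespace MvPolynomial

variable {σ ι R : Type*} [Fintype ι]

theorem coeff_add_self_sum_sq [CommSemiring R] {q : ι → MvPolynomial σ R} {μ : σ →₀ ℕ}
    (h : ∀ i, ∀ α ∈ (q i).support, ∀ β ∈ (q i).support, α + β = μ + μ → α = μ) :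
    coeff (μ + μ) (∑ i, q i ^ 2) = ∑ i, coeff μ (q i) ^ 2 := by
  classical
  rw [coeff_sum]
  refine Finset.sum_congr rfl fun i _ => ?_
  rw [sq, sq, coeff_mul]
  refine Finset.sum_eq_single_of_mem (μ, μ) (Finset.HasAntidiagonal.mem_antidiagonal.2 rfl)
    fun αβ hαβ hne => ?_
  by_contra hne0
  have hα : αβ.1 ∈ (q i).support := mem_support_iff.2 (left_ne_zero_of_mul hne0)
  have hβ : αβ.2 ∈ (q i).support := mem_support_iff.2 (right_ne_zero_of_mul hne0)
  have hsum : αβ.1 + αβ.2 = μ + μ := Finset.HasAntidiagonal.mem_antidiagonal.1 hαβ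
  have hαμ := h i _ hα _ hβ hsum
  rw [hαμ] at hsum
  exact hne (Prod.ext hαμ (add_left_cancel hsum))

variable [CommRing R] [LinearOrder R] [IsStrictOrderedRing R]

theorem exists_le_add_self_mem_support_sum_sq {Γ : Type*} [AddCommMonoid Γ] [LinearOrder Γ]
    [IsOrderedCancelAddMonoid Γ] {f : (σ →₀ ℕ) →+ Γ} (hf : Injective f)
    {q : ι → MvPolynomial σ R} {i : ι} {ν : σ →₀ ℕ} (hν : ν ∈ (q i).support) :
    ∃ μ, f ν ≤ f μ ∧ μ + μ ∈ (∑ i, q i ^ 2).support := by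
  classical
  set S := Finset.univ.biUnion fun i => (q i).support
  have hS : ∀ {i α}, α ∈ (q i).support → α ∈ S := fun h =>
    Finset.mem_biUnion.2 ⟨_, Finset.mem_univ _, h⟩
  obtain ⟨μ, hμS, hμmax⟩ := S.exists_max_image f ⟨ν, hS hν⟩
  refine ⟨μ, hμmax ν (hS hν), ?_⟩
  have hunique : ∀ i, ∀ α ∈ (q i).support, ∀ β ∈ (q i).support, α + β = μ + μ → α = μ :=
    fun i α hα β hβ hsum => hf <|
      ((add_eq_add_iff_eq_and_eq (hμmax α (hS hα)) (hμmax β (hS hβ))).1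
        (by rw [← map_add, ← map_add, hsum])).1
  obtain ⟨j, -, hj⟩ := Finset.mem_biUnion.1 hμS
  rw [mem_support_iff, coeff_add_self_sum_sq hunique]
  exact (Finset.sum_pos' (fun i _ => sq_nonneg (coeff μ (q i)))
    ⟨j, Finset.mem_univ _, sq_pos_of_ne_zero (mem_support_iff.1 hj)⟩).ne'

theorem exists_two_mul_weight_le_of_mem_support_sum_sq [LinearOrder σ] (w : σ → ℤ)
    {q : ι → MvPolynomial σ R} {i : ι} {ν : σ →₀ ℕ} (hν : ν ∈ (q i).support) :
    ∃ δ ∈ (∑ i, q i ^ 2).support, 2 * Finsupp.weight w ν ≤ Finsupp.weight w δ := by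
  let f : (σ →₀ ℕ) →+ ℤ ×ₗ Lex (σ →₀ ℕ) := (toLexAddEquiv _).toAddMonoidHom.comp
    ((Finsupp.weight w).prod (toLexAddEquiv _).toAddMonoidHom)
  have hf : Injective f := fun a b h => congrArg (fun x : ℤ ×ₗ Lex (σ →₀ ℕ) => ofLex (ofLex x).2) h
  obtain ⟨μ, hle, hμ⟩ := exists_le_add_self_mem_support_sum_sq hf hν
  refine ⟨μ + μ, hμ, ?_⟩
  rw [map_add, ← two_mul]
  exact mul_le_mul_of_nonneg_left (Prod.Lex.monotone_fst_ofLex hle) zero_le_two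

end MvPolynomial

noncomputable def motzkin : MvPolynomial (Fin 3) ℝ :=
  X 0 ^ 6 - 3 * X 0 ^ 2 * X 1 ^ 2 * X 2 ^ 2 + X 1 ^ 4 * X 2 ^ 2 + X 1 ^ 2 * X 2 ^ 4

theorem coeff_motzkin (δ : Fin 3 →₀ ℕ) : coeff δ motzkin =
    (if (δ 0, δ 1, δ 2) = (6, 0, 0) then 1 else 0) - (if (δ 0, δ 1, δ 2) = (2, 2, 2) then 3 else 0)
      + (if (δ 0, δ 1, δ 2) = (0, 4, 2) then 1 else 0)
      + (if (δ 0, δ 1, δ 2) = (0, 2, 4) then 1 else 0) := by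
  have h3 : (3 : MvPolynomial (Fin 3) ℝ) = C 3 := rfl
  simp only [motzkin, X_pow_eq_monomial, h3, C_mul_monomial, monomial_mul, coeff_add, coeff_sub,
    coeff_monomial, mul_one]
  simp [Finsupp.ext_iff, Fin.forall_fin_succ, Finsupp.single_apply, eq_comm]

theorem mem_support_motzkin {δ : Fin 3 →₀ ℕ} (hδ : δ ∈ motzkin.support) :
    (δ 0, δ 1, δ 2) ∈ ({(6, 0, 0), (2, 2, 2), (0, 4, 2), (0, 2, 4)} : Finset (ℕ × ℕ × ℕ)) := by
  rw [mem_support_iff, coeff_motzkin] at hδ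
  contrapose! hδ
  simp only [Finset.mem_insert, Finset.mem_singleton, not_or] at hδ
  simp [hδ]

theorem weight_fin_three (w : Fin 3 → ℤ) (ν : Fin 3 →₀ ℕ) :
    Finsupp.weight w ν = ν 0 * w 0 + ν 1 * w 1 + ν 2 * w 2 := by
  simp [Finsupp.weight_apply, Finsupp.sum_fintype, Fin.sum_univ_three]

theorem mem_support_of_motzkin_eq_sum_sq {ι : Type*} [Fintype ι] {q : ι → MvPolynomial (Fin 3) ℝ}
    (hq : motzkin = ∑ i, q i ^ 2) {i : ι} {ν : Fin 3 →₀ ℕ} (hν : ν ∈ (q i).support) :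
    (ν 0, ν 1, ν 2) ∈ ({(3, 0, 0), (1, 1, 1), (0, 2, 1), (0, 1, 2)} : Finset (ℕ × ℕ × ℕ)) := by
  have ineq (w : Fin 3 → ℤ) :
      2 * (ν 0 * w 0 + ν 1 * w 1 + ν 2 * w 2) ≤ max (max (6 * w 0) (2 * w 0 + 2 * w 1 + 2 * w 2))
        (max (4 * w 1 + 2 * w 2) (2 * w 1 + 4 * w 2)) := by
    obtain ⟨δ, hδ, hle⟩ := exists_two_mul_weight_le_of_mem_support_sum_sq w hν
    rw [← hq] at hδ
    have hδ' := mem_support_motzkin hδ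
    simp only [Finset.mem_insert, Finset.mem_singleton, Prod.mk.injEq] at hδ'
    rw [weight_fin_three, weight_fin_three] at hle
    rcases hδ' with ⟨h0, h1, h2⟩ | ⟨h0, h1, h2⟩ | ⟨h0, h1, h2⟩ | ⟨h0, h1, h2⟩ <;>
      simp only [h0, h1, h2] at hle <;> push_cast at hle <;> omega
  -- These four half-planes cut out the triangle with vertices (3,0,0), (0,2,1), (0,1,2)
  -- in the plane ν₀ + ν₁ + ν₂ = 3.
  have h₁ := ineq ![1, 1, 1]
  have h₂ := ineq ![-1, -1, -1]
  have h₃ := ineq ![1, 2, -1]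
  have h₄ := ineq ![1, -1, 2]
  simp only [Matrix.cons_val] at h₁ h₂ h₃ h₄
  simp only [Finset.mem_insert, Finset.mem_singleton, Prod.mk.injEq]
  omega

open MvPolynomial in
theorem motzkin_not_sos :
    ¬ ∃ (k : ℕ) (q : Fin k → MvPolynomial (Fin 3) ℝ),
      (X 0 ^ 6 - 3 * X 0 ^ 2 * X 1 ^ 2 * X 2 ^ 2 + X 1 ^ 4 * X 2 ^ 2
        + X 1 ^ 2 * X 2 ^ 4 : MvPolynomial (Fin 3) ℝ) = ∑ i, (q i) ^ 2 := by
  rintro ⟨k, q, hq⟩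
  change motzkin = _ at hq
  let μ : Fin 3 →₀ ℕ := Finsupp.equivFunOnFinite.symm 1
  have hμ : ∀ i, ∀ α ∈ (q i).support, ∀ β ∈ (q i).support, α + β = μ + μ → α = μ := by
    intro i α hα β hβ hαβ
    have hα' := mem_support_of_motzkin_eq_sum_sq hq hα
    have hβ' := mem_support_of_motzkin_eq_sum_sq hq hβ
    have h j : α j + β j = 2 := by simpa [μ] using congrArg (· j) hαβ
    have h₀ := h 0
    have h₁ := h 1
    have h₂ := h 2
    simp only [Finset.mem_insert, Finset.mem_singleton, Prod.mk.injEq] at hα' hβ'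
    ext j
    fin_cases j <;> simp [μ] <;> omega
  have hcoeff : coeff (μ + μ) motzkin = -3 := by simp [coeff_motzkin, μ]
  rw [hq, coeff_add_self_sum_sq hμ] at hcoeff
  have : 0 ≤ ∑ i, coeff μ (q i) ^ 2 := by positivity
  linarith
end

section
/- The sequence y = (1, 1, 1, 1, 2) has a positive semidefinite 3-by-3 Hankel moment matrix M_2(y) = [[1,1,1],[1,1,1],[1,1,2]], yet y is not in the convex hull of the moment curve {(1, t, t^2, t^3, t^4) : t in R}. -/
/-!
The linear functional `y ↦ y₀ - 2y₁ + y₂` is `(t - 1)²` on the moment curve, so it is nonnegative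
there and vanishes only at `t = 1`. Its zero set is therefore a face of the convex hull, consisting
of the single point `(1, 1, 1, 1, 1)`. The vector `(1, 1, 1, 1, 2)` lies on this face (it has zero
variance about `1`) but is not that point. Positive semidefiniteness holds since the Hankel matrix
is the Gram matrix of the columns of `[[1, 1, 1], [0, 0, 1]]`.
-/

open Set Matrix

theorem mem_convexHull_inter_zeroSet_of_nonneg {𝕜 E : Type*} [Field 𝕜] [LinearOrder 𝕜]
    [IsStrictOrderedRing 𝕜] [AddCommGroup E] [Module 𝕜 E] {s : Set E} (f : E →ᵃ[𝕜] 𝕜)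
    (hs : ∀ x ∈ s, 0 ≤ f x) {x : E} (hx : x ∈ convexHull 𝕜 s) (hfx : f x = 0) :
    x ∈ convexHull 𝕜 (s ∩ f ⁻¹' {0}) := by
  -- The zero set of `f` is a face: a convex combination with positive weights can only
  -- vanish if both endpoints do.
  let C : Set E := {y | 0 ≤ f y ∧ (f y = 0 → y ∈ convexHull 𝕜 (s ∩ f ⁻¹' {0}))}
  have hC : Convex 𝕜 C := by
    intro y ⟨hy, hy₀⟩ z ⟨hz, hz₀⟩ a b ha hb hab
    have hf : f (a • y + b • z) = a * f y + b * f z := Convex.combo_affine_apply hab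
    refine ⟨hf ▸ by positivity, fun h => ?_⟩
    rcases ha.eq_or_lt with rfl | ha
    · obtain rfl : b = 1 := by simpa using hab
      simpa using hz₀ (by simpa using h)
    rcases hb.eq_or_lt with rfl | hb
    · obtain rfl : a = 1 := by simpa using hab
      simpa using hy₀ (by simpa using h)
    have hfy : f y = 0 := by nlinarith [mul_nonneg hb.le hz]
    have hfz : f z = 0 := by nlinarith [mul_nonneg ha.le hy]
    exact convex_convexHull 𝕜 _ (hy₀ hfy) (hz₀ hfz) ha.le hb.le hab
  have hsC : s ⊆ C := fun y hy => ⟨hs y hy, fun h => subset_convexHull 𝕜 _ ⟨hy, h⟩⟩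
  exact (convexHull_min hsC hC hx).2 hfx

def momentCurve (t : ℝ) : Fin 5 → ℝ := ![1, t, t ^ 2, t ^ 3, t ^ 4]

/-- On the moments `yₖ = ∫ tᵏ dμ` of a probability measure this is `∫ (t - a)² dμ`. -/
def secondMomentAbout (a : ℝ) : (Fin 5 → ℝ) →ᵃ[ℝ] ℝ :=
  (a ^ 2 • LinearMap.proj 0 - (2 * a) • LinearMap.proj 1 + LinearMap.proj 2 :
    (Fin 5 → ℝ) →ₗ[ℝ] ℝ).toAffineMap

theorem secondMomentAbout_apply (a : ℝ) (y : Fin 5 → ℝ) :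
    secondMomentAbout a y = a ^ 2 * y 0 - 2 * a * y 1 + y 2 :=
  rfl

theorem secondMomentAbout_momentCurve (a t : ℝ) :
    secondMomentAbout a (momentCurve t) = (t - a) ^ 2 := by
  rw [secondMomentAbout_apply]
  change a ^ 2 * 1 - 2 * a * t + t ^ 2 = _
  ring

theorem eq_momentCurve_of_secondMomentAbout_eq_zero {a : ℝ} {y : Fin 5 → ℝ}
    (hy : y ∈ convexHull ℝ (range momentCurve)) (h : secondMomentAbout a y = 0) :
    y = momentCurve a := by
  have hface : range momentCurve ∩ secondMomentAbout a ⁻¹' {0} = {momentCurve a} := by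
    ext z
    simp only [mem_inter_iff, mem_range, mem_preimage, mem_singleton_iff]
    constructor
    · rintro ⟨⟨t, rfl⟩, ht⟩
      rw [secondMomentAbout_momentCurve, sq_eq_zero_iff, sub_eq_zero] at ht
      rw [ht]
    · rintro rfl
      exact ⟨⟨a, rfl⟩, by rw [secondMomentAbout_momentCurve, sub_self, sq, mul_zero]⟩
  simpa [hface] using mem_convexHull_inter_zeroSet_of_nonneg _
    (by rintro _ ⟨t, rfl⟩; rw [secondMomentAbout_momentCurve]; positivity) hy h

theorem hankel_eq_conjTranspose_mul_self :
    Matrix.of ![![(1:ℝ), 1, 1], ![1, 1, 1], ![1, 1, 2]] =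
      (!![1, 1, 1; 0, 0, 1] : Matrix (Fin 2) (Fin 3) ℝ)ᴴ *
        (!![1, 1, 1; 0, 0, 1] : Matrix (Fin 2) (Fin 3) ℝ) := by
  ext i j
  fin_cases i <;> fin_cases j <;> norm_num [Matrix.mul_apply, Fin.sum_univ_succ]

theorem hankel_psd_but_not_in_moment_curve_hull :
    (Matrix.of ![![(1:ℝ),1,1],![1,1,1],![1,1,2]]).PosSemidef ∧
    (![(1:ℝ),1,1,1,2] ∉ convexHull ℝ
      {z : Fin 5 → ℝ | ∃ t : ℝ, z = ![1, t, t^2, t^3, t^4]}) := by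
  refine ⟨hankel_eq_conjTranspose_mul_self ▸ posSemidef_conjTranspose_mul_self _, fun hy => ?_⟩
  have hcurve : {z : Fin 5 → ℝ | ∃ t : ℝ, z = ![1, t, t^2, t^3, t^4]} = range momentCurve := by
    ext z; simp [momentCurve, eq_comm]
  rw [hcurve] at hy
  have hdirac := eq_momentCurve_of_secondMomentAbout_eq_zero (a := 1) hy
    (by simp [secondMomentAbout_apply]; norm_num)
  simpa [momentCurve] using congrFun hdirac 4
end
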